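/- Let t_x, t_y, t_z, λ_x, λ_y, λ_z be real numbers and let ρ be a 2×2 complex matrix with Tr ρ = 1. Set a_j = Tr(ρ σ_j) for j ∈ {x,y,z}, and define Ψ(ρ) = (1/2)·(I + (t_x + λ_x a_x) σ_x + (t_y + λ_y a_y) σ_y + (t_z + λ_z a_z) σ_z). Define the kernel K(m,α,β; m',α',β') = δ_{m m'}·[ 1/2 − m t_x cos α sin β − m t_y sin α sin β + m t_z cos β + (3/2)·(λ_x cos α sin β cos α' sin β' + λ_y sin α sin β sin α' sin β' + λ_z cos β cos β') ]. Then for all m ∈ {−1/2,1/2} and real α, β: Σ_{m' ∈ {−1/2,1/2}} (1/(2π)) ∫₀^{2π} ∫₀^{π} K(m,α,β; m',α',β') · w_ρ(m',α',β') · sin β' dβ' dα' = Tr(Ψ(ρ) · U(m,α,β)). -/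

import Mathlib

open Matrix Real MeasureTheory intervalIntegral

noncomputable def sigmaX : Matrix (Fin 2) (Fin 2) ℂ := !![0, 1; 1, 0]
noncomputable def sigmaY : Matrix (Fin 2) (Fin 2) ℂ := !![0, -Complex.I; Complex.I, 0]
noncomputable def sigmaZ : Matrix (Fin 2) (Fin 2) ℂ := !![1, 0; 0, -1]

/-- The qubit de-quantizer U(m, α, β). -/
noncomputable def dequantizer (m α β : ℝ) : Matrix (Fin 2) (Fin 2) ℂ :=
  (1/2 : ℂ) • (1 : Matrix (Fin 2) (Fin 2) ℂ)
    - ((m * Real.cos α * Real.sin β : ℝ) : ℂ) • sigmaX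
    - ((m * Real.sin α * Real.sin β : ℝ) : ℂ) • sigmaY
    + ((m * Real.cos β : ℝ) : ℂ) • sigmaZ

/-- The qubit tomogram of a 2×2 complex matrix ρ. -/
noncomputable def tomogram (ρ : Matrix (Fin 2) (Fin 2) ℂ) (m α β : ℝ) : ℂ :=
  (ρ * dequantizer m α β).trace

/-- The non-unital qubit channel in canonical form with translation (t_x,t_y,t_z)
and scalings (λ_x,λ_y,λ_z). -/
noncomputable def Psi (tx ty tz lx ly lz : ℝ) (ρ : Matrix (Fin 2) (Fin 2) ℂ) :
    Matrix (Fin 2) (Fin 2) ℂ :=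
  (1/2 : ℂ) • ((1 : Matrix (Fin 2) (Fin 2) ℂ)
    + ((tx : ℂ) + (lx : ℂ) * (ρ * sigmaX).trace) • sigmaX
    + ((ty : ℂ) + (ly : ℂ) * (ρ * sigmaY).trace) • sigmaY
    + ((tz : ℂ) + (lz : ℂ) * (ρ * sigmaZ).trace) • sigmaZ)

/-- The tomographic kernel of the channel Ψ. -/
noncomputable def kernelPsi (tx ty tz lx ly lz : ℝ) (m α β m' α' β' : ℝ) : ℝ :=
  (if m = m' then (1:ℝ) else 0) *
    (1/2 - m * tx * Real.cos α * Real.sin β - m * ty * Real.sin α * Real.sin β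
      + m * tz * Real.cos β
      + (3/2) * (lx * Real.cos α * Real.sin β * Real.cos α' * Real.sin β'
          + ly * Real.sin α * Real.sin β * Real.sin α' * Real.sin β'
          + lz * Real.cos β * Real.cos β'))

/-!
Only the term `m' = m` of the kernel survives. Both the kernel and the tomogram at `m' = m`
are affine functions of the unit vector `n = (cos α' sin β', sin α' sin β', cos β')`, and on the
sphere, against `sin β' dβ' dα' / (2π)`, the constants integrate to `2`, the coordinates `nᵢ`
to `0` and the products `nᵢ nⱼ` to `(2/3) δᵢⱼ`. The factor `3/2` in the kernel cancels this
`2/3`, which turns the Bloch vector `a` of `ρ` into `t + λ a`.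
-/

/-- An affine function `c₀ + c · n` of the unit vector `n` with polar angle `β` and azimuth `α`. -/
noncomputable def sphericalAffine (c₀ c₁ c₂ c₃ : ℂ) (α β : ℝ) : ℂ :=
  c₀ + c₁ * cos α * sin β + c₂ * sin α * sin β + c₃ * cos β

lemma hasDerivAt_ofReal_sin (x : ℝ) :
    HasDerivAt (fun y : ℝ => (sin y : ℂ)) (cos x : ℂ) x :=
  (hasDerivAt_sin x).ofReal_comp

lemma hasDerivAt_ofReal_cos (x : ℝ) :
    HasDerivAt (fun y : ℝ => (cos y : ℂ)) (-(sin x : ℂ)) x := by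
  simpa only [Complex.ofReal_neg] using (hasDerivAt_cos x).ofReal_comp

lemma ofReal_sin_sq_add_cos_sq (x : ℝ) : (sin x : ℂ) ^ 2 + (cos x : ℂ) ^ 2 = 1 := by
  exact_mod_cast sin_sq_add_cos_sq x

lemma integral_affine_mul_affine_mul_sin (p q r p' q' r' : ℂ) :
    ∫ x in (0:ℝ)..π, (p + q * sin x + r * cos x) * (p' + q' * sin x + r' * cos x) * sin x
      = 2 * p * p' + π / 2 * (p * q' + q * p') + 4 / 3 * q * q' + 2 / 3 * r * r' := by
  have hderiv : ∀ x : ℝ, HasDerivAt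
      (fun y : ℝ => -p * p' * cos y + (p * q' + q * p') * ((y - sin y * cos y) / 2)
        + (p * r' + r * p') * (sin y * sin y / 2)
        + q * q' * (cos y * cos y * cos y / 3 - cos y)
        + (q * r' + r * q') * (sin y * sin y * sin y / 3)
        - r * r' * (cos y * cos y * cos y / 3))
      ((p + q * sin x + r * cos x) * (p' + q' * sin x + r' * cos x) * sin x) x := by
    intro x
    have hs := hasDerivAt_ofReal_sin x
    have hc := hasDerivAt_ofReal_cos x
    have hid : HasDerivAt (fun y : ℝ => (y : ℂ)) 1 x := (hasDerivAt_id x).ofReal_comp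
    refine ((((((hc.const_mul (-p * p')).add
      (((hid.sub (hs.mul hc)).div_const 2).const_mul (p * q' + q * p'))).add
      (((hs.mul hs).div_const 2).const_mul (p * r' + r * p'))).add
      (((((hc.mul hc).mul hc).div_const 3).sub hc).const_mul (q * q'))).add
      ((((hs.mul hs).mul hs).div_const 3).const_mul (q * r' + r * q'))).sub
      ((((hc.mul hc).mul hc).div_const 3).const_mul (r * r'))).congr_deriv ?_
    simp only [Pi.mul_apply]
    linear_combination -((p * q' + q * p') / 2 + q * q' * sin x) * ofReal_sin_sq_add_cos_sq x
  rw [integral_eq_sub_of_hasDerivAt (fun x _ => hderiv x)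
    (Continuous.intervalIntegrable (by fun_prop) _ _)]
  simp only [sin_pi, cos_pi, sin_zero, cos_zero, Complex.ofReal_zero, Complex.ofReal_one,
    Complex.ofReal_neg]
  ring

lemma integral_trigQuadratic_two_pi (a b c d e f : ℂ) :
    ∫ x in (0:ℝ)..(2 * π), (a + b * cos x + c * sin x + d * cos x ^ 2
        + e * cos x * sin x + f * sin x ^ 2)
      = 2 * π * a + π * d + π * f := by
  have hderiv : ∀ x : ℝ, HasDerivAt
      (fun y : ℝ => a * y + b * sin y - c * cos y + d * ((y + sin y * cos y) / 2)
        + e * (sin y * sin y / 2) + f * ((y - sin y * cos y) / 2))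
      (a + b * cos x + c * sin x + d * cos x ^ 2 + e * cos x * sin x + f * sin x ^ 2) x := by
    intro x
    have hs := hasDerivAt_ofReal_sin x
    have hc := hasDerivAt_ofReal_cos x
    have hid : HasDerivAt (fun y : ℝ => (y : ℂ)) 1 x := (hasDerivAt_id x).ofReal_comp
    refine ((((((hid.const_mul a).add (hs.const_mul b)).sub (hc.const_mul c)).add
      (((hid.add (hs.mul hc)).div_const 2).const_mul d)).add
      (((hs.mul hs).div_const 2).const_mul e)).add
      (((hid.sub (hs.mul hc)).div_const 2).const_mul f)).congr_deriv ?_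
    linear_combination -((d + f) / 2) * ofReal_sin_sq_add_cos_sq x
  rw [integral_eq_sub_of_hasDerivAt (fun x _ => hderiv x)
    (Continuous.intervalIntegrable (by fun_prop) _ _)]
  simp only [sin_two_pi, cos_two_pi, sin_zero, cos_zero, Complex.ofReal_zero,
    Complex.ofReal_one, Complex.ofReal_mul, Complex.ofReal_ofNat]
  ring

lemma integral_sphericalAffine_mul (k₀ k₁ k₂ k₃ w₀ w₁ w₂ w₃ : ℂ) :
    (1 / (2 * (π : ℂ))) * ∫ α in (0:ℝ)..(2 * π), ∫ β in (0:ℝ)..π,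
        sphericalAffine k₀ k₁ k₂ k₃ α β * sphericalAffine w₀ w₁ w₂ w₃ α β * sin β
      = 2 * k₀ * w₀ + 2 / 3 * (k₁ * w₁ + k₂ * w₂ + k₃ * w₃) := by
  have hinner : ∀ α : ℝ, ∫ β in (0:ℝ)..π,
        sphericalAffine k₀ k₁ k₂ k₃ α β * sphericalAffine w₀ w₁ w₂ w₃ α β * sin β
      = (2 * k₀ * w₀ + 2 / 3 * k₃ * w₃) + π / 2 * (k₀ * w₁ + k₁ * w₀) * cos α
        + π / 2 * (k₀ * w₂ + k₂ * w₀) * sin α + 4 / 3 * k₁ * w₁ * cos α ^ 2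
        + 4 / 3 * (k₁ * w₂ + k₂ * w₁) * cos α * sin α + 4 / 3 * k₂ * w₂ * sin α ^ 2 := by
    intro α
    convert integral_affine_mul_affine_mul_sin k₀ (k₁ * cos α + k₂ * sin α) k₃
      w₀ (w₁ * cos α + w₂ * sin α) w₃ using 1
    · simp only [sphericalAffine]
      congr 1
      funext β
      ring
    · ring
  simp only [hinner, integral_trigQuadratic_two_pi]
  field_simp
  ring

lemma tomogram_eq_sphericalAffine (ρ : Matrix (Fin 2) (Fin 2) ℂ) (m α β : ℝ) :
    tomogram ρ m α β = sphericalAffine (ρ.trace / 2) (-m * (ρ * sigmaX).trace)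
      (-m * (ρ * sigmaY).trace) (m * (ρ * sigmaZ).trace) α β := by
  simp only [tomogram, dequantizer, sphericalAffine, Matrix.mul_sub, Matrix.mul_add,
    Matrix.mul_smul, Matrix.mul_one, trace_add, trace_sub, trace_smul, smul_eq_mul]
  push_cast
  ring

lemma trace_bloch_mul_dequantizer (cx cy cz : ℂ) (m α β : ℝ) :
    (((1/2 : ℂ) • (1 + cx • sigmaX + cy • sigmaY + cz • sigmaZ)) * dequantizer m α β).trace
      = 1/2 - m * cx * cos α * sin β - m * cy * sin α * sin β + m * cz * cos β := by
  simp only [dequantizer, sigmaX, sigmaY, sigmaZ, trace_fin_two, Matrix.mul_apply,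
    Fin.sum_univ_two, Matrix.add_apply, Matrix.sub_apply, Matrix.smul_apply, one_apply_eq,
    one_apply_ne, of_apply, cons_val', cons_val_zero, cons_val_one, cons_val_fin_one, smul_eq_mul,
    Complex.ofReal_mul, ne_eq, zero_ne_one, one_ne_zero, not_false_eq_true]
  linear_combination (m * cy * sin α * sin β) * Complex.I_sq

lemma kernelPsi_of_ne (tx ty tz lx ly lz : ℝ) {m m' : ℝ} (h : m ≠ m') (α β α' β' : ℝ) :
    kernelPsi tx ty tz lx ly lz m α β m' α' β' = 0 := by
  simp [kernelPsi, h]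

lemma ofReal_kernelPsi_self (tx ty tz lx ly lz m α β α' β' : ℝ) :
    (kernelPsi tx ty tz lx ly lz m α β m α' β' : ℂ)
      = sphericalAffine (1/2 - m * tx * cos α * sin β - m * ty * sin α * sin β + m * tz * cos β)
        (3/2 * lx * cos α * sin β) (3/2 * ly * sin α * sin β) (3/2 * lz * cos β) α' β' := by
  simp only [kernelPsi, sphericalAffine, if_true]
  push_cast
  ring

theorem kernelPsi_represents (tx ty tz lx ly lz : ℝ)
    (ρ : Matrix (Fin 2) (Fin 2) ℂ) (hρ : ρ.trace = 1) :
    ∀ m : ℝ, m = -(1/2) ∨ m = 1/2 → ∀ α β : ℝ,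
      (1 / (2 * (Real.pi : ℂ))) *
        ∫ α' in (0:ℝ)..(2 * Real.pi), ∫ β' in (0:ℝ)..Real.pi,
          ((kernelPsi tx ty tz lx ly lz m α β (1/2) α' β' : ℂ) * tomogram ρ (1/2) α' β'
            + (kernelPsi tx ty tz lx ly lz m α β (-(1/2)) α' β' : ℂ)
                * tomogram ρ (-(1/2)) α' β')
          * (Real.sin β' : ℂ)
      = (Psi tx ty tz lx ly lz ρ * dequantizer m α β).trace := by
  intro m hm α β
  have hdiag : ∀ α' β' : ℝ,
      (kernelPsi tx ty tz lx ly lz m α β (1/2) α' β' : ℂ) * tomogram ρ (1/2) α' β'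
        + (kernelPsi tx ty tz lx ly lz m α β (-(1/2)) α' β' : ℂ) * tomogram ρ (-(1/2)) α' β'
      = (kernelPsi tx ty tz lx ly lz m α β m α' β' : ℂ) * tomogram ρ m α' β' := by
    intro α' β'
    rcases hm with rfl | rfl
    · rw [kernelPsi_of_ne tx ty tz lx ly lz (show -(1/2 : ℝ) ≠ 1/2 by norm_num)]
      simp
    · rw [kernelPsi_of_ne tx ty tz lx ly lz (show (1/2 : ℝ) ≠ -(1/2) by norm_num)]
      simp
  simp_rw [hdiag, ofReal_kernelPsi_self, tomogram_eq_sphericalAffine, hρ]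
  rw [integral_sphericalAffine_mul, Psi, trace_bloch_mul_dequantizer]
  ring
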